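/- Let f be a univariate real polynomial of degree 2d that is nonnegative on ℝ, and write f(x) = (x−r₁)^{2e₁}(x−r₂)^{2e₂}⋯(x−r_k)^{2e_k}·g(x) where r₁,…,r_k ∈ ℝ are distinct, e₁,…,e_k are positive integers, e = e₁+⋯+e_k, and g is a polynomial of degree 2(d−e) strictly positive on ℝ. Then there is an injective linear map T from symmetric (d−e+1)×(d−e+1) matrices to symmetric (d+1)×(d+1) matrices that maps the Gram spectrahedron of g bijectively onto the Gram spectrahedron of f; in particular, the affine span of GramS(f) has dimension equal to C(d−e, 2). -/

import Mathlib

/-!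
Write `f = p² g` with `p = ∏ (X - rᵢ)^{eᵢ}` and `m = d - e`. Multiplication by `p` maps
polynomials of degree `≤ m` injectively to polynomials of degree `≤ d`; if `M` is its matrix,
`T Q = Mᵀ Q M` is injective and `Xᵀ (Mᵀ Q M) X = p² · Xᵀ Q X`, so `T` maps `GramS(g)` into
`GramS(f)`. Conversely a Gram matrix of `f` factors as `Bᵀ B`, i.e. `f = ∑ qₛ²` with `qₛ` read
off the rows of `B`; since all roots of `p` are real, `p² ∣ ∑ qₛ²` forces `p ∣ qₛ`, so `B = B' M`
and the Gram matrix is `T (B'ᵀ B')`.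

For the dimension: `g > 0` has a Gram matrix `Q + ε • 1` with `Q ⪰ 0`, because for small `ε` the
polynomial `g - ε ∑ x^{2i}` is nonnegative and hence a sum of squares. Perturbing it shows that
`GramS(g)` spans the whole affine space of symmetric Gram matrices of `g`, whose direction, the
symmetric matrices with zero Gram polynomial, has dimension `C(m+2, 2) - (2m+1) = C(m, 2)`.
-/

open Polynomial Finset

/-- The Gram spectrahedron of a univariate real polynomial `g` of degree at most `2m`:
the set of positive semidefinite real symmetric `(m+1) × (m+1)` matrices `Q` with
`g = Xᵀ Q X`, where `X = (1, x, …, x^m)ᵀ`. -/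
def GramS (m : ℕ) (g : Polynomial ℝ) : Set (Matrix (Fin (m + 1)) (Fin (m + 1)) ℝ) :=
  {Q | Q.PosSemidef ∧
    g = ∑ i : Fin (m + 1), ∑ j : Fin (m + 1), C (Q i j) * X ^ ((i : ℕ) + (j : ℕ))}

open Matrix Filter Asymptotics

noncomputable def gramPoly (n : ℕ) : Matrix (Fin n) (Fin n) ℝ →ₗ[ℝ] ℝ[X] where
  toFun Q := ∑ i : Fin n, ∑ j : Fin n, C (Q i j) * X ^ ((i : ℕ) + (j : ℕ))
  map_add' Q R := by simp only [Matrix.add_apply, C_add, add_mul, sum_add_distrib]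
  map_smul' c Q := by
    simp only [Matrix.smul_apply, smul_eq_mul, C_mul, mul_assoc, smul_sum, smul_eq_C_mul,
      RingHom.id_apply]

theorem mem_gramS_iff {m : ℕ} {g : ℝ[X]} {Q : Matrix (Fin (m + 1)) (Fin (m + 1)) ℝ} :
    Q ∈ GramS m g ↔ Q.PosSemidef ∧ g = gramPoly (m + 1) Q := Iff.rfl

theorem gramPoly_eq_dotProduct {n : ℕ} (Q : Matrix (Fin n) (Fin n) ℝ) :
    gramPoly n Q = (fun i : Fin n => (X : ℝ[X]) ^ (i : ℕ)) ⬝ᵥ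
      (Q.map C *ᵥ fun i : Fin n => (X : ℝ[X]) ^ (i : ℕ)) := by
  simp only [gramPoly, LinearMap.coe_mk, AddHom.coe_mk, dotProduct, mulVec, map_apply, mul_sum]
  refine sum_congr rfl fun i _ => sum_congr rfl fun j _ => ?_
  ring

theorem gramPoly_transpose_mul_mul {k n : ℕ} (M : Matrix (Fin k) (Fin n) ℝ)
    (Q : Matrix (Fin k) (Fin k) ℝ) :
    gramPoly n (Mᵀ * Q * M) =
      (fun i => ofFn n (M i)) ⬝ᵥ (Q.map C *ᵥ fun i => ofFn n (M i)) := by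
  have hrows : (M.map C *ᵥ fun a : Fin n => (X : ℝ[X]) ^ (a : ℕ)) = fun i => ofFn n (M i) := by
    ext1 i
    simp [mulVec, dotProduct, ofFn_eq_sum_monomial, C_mul_X_pow_eq_monomial]
  rw [gramPoly_eq_dotProduct, ← hrows, Matrix.map_mul, Matrix.map_mul, transpose_map,
    ← mulVec_mulVec, ← mulVec_mulVec, mulVec_transpose, dotProduct_comm, ← dotProduct_mulVec,
    dotProduct_comm]

theorem gramPoly_transpose_mul_self {k n : ℕ} (B : Matrix (Fin k) (Fin n) ℝ) :
    gramPoly n (Bᵀ * B) = ∑ s, ofFn n (B s) ^ 2 := by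
  simpa [dotProduct, sq] using gramPoly_transpose_mul_mul B 1

theorem gramPoly_transpose {n : ℕ} (Q : Matrix (Fin n) (Fin n) ℝ) :
    gramPoly n Qᵀ = gramPoly n Q := by
  simp only [gramPoly, LinearMap.coe_mk, AddHom.coe_mk, transpose_apply]
  rw [sum_comm]
  simp only [add_comm]

theorem gramPoly_single {n : ℕ} (i j : Fin n) (a : ℝ) :
    gramPoly n (single i j a) = C a * X ^ ((i : ℕ) + (j : ℕ)) := by
  simp [gramPoly, single_apply, apply_ite C, ite_mul, ite_and]

theorem natDegree_gramPoly_le (m : ℕ) (Q : Matrix (Fin (m + 1)) (Fin (m + 1)) ℝ) :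
    (gramPoly (m + 1) Q).natDegree ≤ 2 * m := by
  show (∑ i : Fin (m + 1), ∑ j : Fin (m + 1), C (Q i j) * X ^ ((i : ℕ) + (j : ℕ))).natDegree ≤ _
  refine natDegree_sum_le_of_forall_le _ _ fun i _ ↦
    natDegree_sum_le_of_forall_le _ _ fun j _ ↦ ?_
  exact (natDegree_C_mul_X_pow_le _ _).trans (by omega)

noncomputable def mulMatrix (p : ℝ[X]) (m d : ℕ) : Matrix (Fin (m + 1)) (Fin (d + 1)) ℝ :=
  of fun i a => (p * X ^ (i : ℕ)).coeff a

section mulMatrix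

variable {p : ℝ[X]} {m d : ℕ}

theorem ofFn_mulMatrix (hpd : p.natDegree + m ≤ d) (i : Fin (m + 1)) :
    ofFn (d + 1) (mulMatrix p m d i) = p * X ^ (i : ℕ) := by
  have hdeg : (p * X ^ (i : ℕ)).natDegree < d + 1 := by
    refine natDegree_mul_le.trans_lt ?_
    rw [natDegree_X_pow]
    omega
  exact ofFn_comp_toFn_eq_id_of_natDegree_lt hdeg

theorem ofFn_vecMul_mulMatrix (hpd : p.natDegree + m ≤ d) (w : Fin (m + 1) → ℝ) :
    ofFn (d + 1) (w ᵥ* mulMatrix p m d) = p * ofFn (m + 1) w := by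
  simp only [vecMul_eq_sum, map_sum, map_smul, ofFn_mulMatrix hpd, ofFn_eq_sum_monomial,
    mul_sum, ← C_mul_X_pow_eq_monomial, smul_eq_C_mul]
  exact sum_congr rfl fun i _ => by ring

theorem gramPoly_transpose_mulMatrix_mul_mulMatrix (hpd : p.natDegree + m ≤ d)
    (Q : Matrix (Fin (m + 1)) (Fin (m + 1)) ℝ) :
    gramPoly (d + 1) ((mulMatrix p m d)ᵀ * Q * mulMatrix p m d) =
      p ^ 2 * gramPoly (m + 1) Q := by
  have hrows : (fun i => ofFn (d + 1) (mulMatrix p m d i)) =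
      p • fun i : Fin (m + 1) => X ^ (i : ℕ) := by
    ext1 i
    rw [ofFn_mulMatrix hpd, Pi.smul_apply, smul_eq_mul]
  rw [gramPoly_transpose_mul_mul, hrows, gramPoly_eq_dotProduct, mulVec_smul, smul_dotProduct,
    dotProduct_smul, smul_eq_mul, smul_eq_mul, ← mul_assoc, sq]

theorem vecMul_mulMatrix_injective (hp : p ≠ 0) (hpd : p.natDegree + m ≤ d) :
    Function.Injective (mulMatrix p m d).vecMul := by
  intro v w hvw
  have := congrArg (ofFn (d + 1)) hvw
  rwa [ofFn_vecMul_mulMatrix hpd, ofFn_vecMul_mulMatrix hpd, mul_right_inj' hp,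
    (injective_ofFn _).eq_iff] at this

theorem exists_vecMul_mulMatrix_eq (hp : p ≠ 0) (hpd : p.natDegree + m = d)
    {v : Fin (d + 1) → ℝ} (hv : p ∣ ofFn (d + 1) v) : ∃ w, w ᵥ* mulMatrix p m d = v := by
  obtain ⟨h, hh⟩ := hv
  have hdeg : h.natDegree < m + 1 := by
    rcases eq_or_ne h 0 with rfl | h0
    · simp
    have := ofFn_natDegree_lt (Nat.succ_pos d) v
    rw [hh, natDegree_mul hp h0] at this
    omega
  refine ⟨toFn (m + 1) h, injective_ofFn (d + 1) ?_⟩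
  rw [ofFn_vecMul_mulMatrix hpd.le, ofFn_comp_toFn_eq_id_of_natDegree_lt hdeg, hh]

end mulMatrix

noncomputable def congrMatrix {k n : Type*} [Fintype k] (M : Matrix k n ℝ) :
    Matrix k k ℝ →ₗ[ℝ] Matrix n n ℝ :=
  (mulLeftLinearMap n ℝ Mᵀ).comp (mulRightLinearMap k ℝ M)

theorem congrMatrix_apply {k n : Type*} [Fintype k] (M : Matrix k n ℝ) (Q : Matrix k k ℝ) :
    congrMatrix M Q = Mᵀ * Q * M :=
  (Matrix.mul_assoc _ _ _).symm

theorem congrMatrix_injective {k n : Type*} [Fintype k] [Nonempty k] [Nonempty n]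
    {M : Matrix k n ℝ} (hM : Function.Injective M.vecMul) :
    Function.Injective (congrMatrix M) := by
  refine (mul_right_injective_iff_mulVec_injective.2 ?_).comp
    (mul_left_injective_iff_vecMul_injective.2 hM)
  intro v w hvw
  exact hM (by simpa only [mulVec_transpose] using hvw)

theorem X_sub_C_sq_dvd_sub_C_eval {h : ℝ[X]} {x₀ : ℝ} (hmin : ∀ x, h.eval x₀ ≤ h.eval x) :
    (X - C x₀) ^ 2 ∣ h - C (h.eval x₀) := by
  rcases eq_or_ne (h - C (h.eval x₀)) 0 with h0 | h0
  · rw [h0]; exact dvd_zero _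
  have hderiv : (derivative h).eval x₀ = 0 := by
    have hloc : IsLocalMin (fun x => h.eval x) x₀ := Eventually.of_forall hmin
    simpa only [Polynomial.deriv] using hloc.deriv_eq_zero
  rw [← le_rootMultiplicity_iff h0, Nat.succ_le_iff, one_lt_rootMultiplicity_iff_isRoot h0]
  simpa [IsRoot.def] using hderiv

theorem exists_eq_C_add_X_sub_C_sq_mul {h : ℝ[X]} (hnn : ∀ x, 0 ≤ h.eval x) :
    ∃ x₀ h₁, h = C (h.eval x₀) + (X - C x₀) ^ 2 * h₁ ∧ ∀ x, 0 ≤ h₁.eval x := by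
  obtain ⟨x₀, hx₀⟩ := h.exists_forall_norm_le
  have hmin : ∀ x, h.eval x₀ ≤ h.eval x := fun x => by
    simpa only [Real.norm_of_nonneg (hnn _)] using hx₀ x
  obtain ⟨h₁, hh₁⟩ := X_sub_C_sq_dvd_sub_C_eval hmin
  refine ⟨x₀, h₁, by rw [← hh₁, add_sub_cancel], ?_⟩
  have hoff : ∀ x ≠ x₀, 0 ≤ h₁.eval x := fun x hx => by
    have hval := congrArg (eval x) hh₁
    simp only [eval_sub, eval_C, eval_mul, eval_pow, eval_X] at hval
    have hpos : 0 < (x - x₀) ^ 2 := by positivity [sub_ne_zero.2 hx]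
    exact nonneg_of_mul_nonneg_right (hval ▸ sub_nonneg.2 (hmin x)) hpos
  have hclosed : IsClosed {x | 0 ≤ h₁.eval x} := isClosed_le continuous_const h₁.continuous
  intro x
  exact hclosed.closure_subset_iff.2 (fun y hy => hoff y hy)
    ((dense_compl_singleton x₀).closure_eq.symm ▸ Set.mem_univ x)

theorem exists_posSemidef_gramPoly_eq (m : ℕ) {h : ℝ[X]} (hdeg : h.natDegree ≤ 2 * m)
    (hnn : ∀ x, 0 ≤ h.eval x) :
    ∃ Q : Matrix (Fin (m + 1)) (Fin (m + 1)) ℝ, Q.PosSemidef ∧ gramPoly (m + 1) Q = h := by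
  induction m generalizing h with
  | zero =>
    have hC : h = C (h.coeff 0) := eq_C_of_natDegree_eq_zero (by omega)
    have h0 : 0 ≤ h.coeff 0 := by simpa [coeff_zero_eq_eval_zero] using hnn 0
    refine ⟨single 0 0 (h.coeff 0), ?_, by rw [gramPoly_single, hC]; simp⟩
    rw [← diagonal_single]
    exact PosSemidef.diagonal (Pi.single_nonneg.2 h0)
  | succ m ih =>
    obtain ⟨x₀, h₁, hh, hnn₁⟩ := exists_eq_C_add_X_sub_C_sq_mul hnn
    have hdeg₁ : h₁.natDegree ≤ 2 * m := by
      rcases eq_or_ne h₁ 0 with rfl | h0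
      · simp
      have : ((X - C x₀) ^ 2 * h₁).natDegree ≤ 2 * (m + 1) := by
        rw [show (X - C x₀) ^ 2 * h₁ = h - C (h.eval x₀) by linear_combination -hh]
        exact (natDegree_sub_le _ _).trans (by simpa using hdeg)
      rw [natDegree_mul (pow_ne_zero 2 (X_sub_C_ne_zero x₀)) h0,
        natDegree_pow, natDegree_X_sub_C] at this
      omega
    obtain ⟨Q₁, hQ₁, hgram₁⟩ := ih hdeg₁ hnn₁
    have hpd : (X - C x₀).natDegree + m ≤ m + 1 := by rw [natDegree_X_sub_C, add_comm]
    refine ⟨single 0 0 (h.eval x₀) + congrMatrix (mulMatrix (X - C x₀) m (m + 1)) Q₁, ?_, ?_⟩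
    · refine PosSemidef.add ?_ ?_
      · rw [← diagonal_single]
        exact PosSemidef.diagonal (Pi.single_nonneg.2 (hnn x₀))
      · rw [congrMatrix_apply]
        simpa using hQ₁.conjTranspose_mul_mul_same (mulMatrix (X - C x₀) m (m + 1))
    · rw [map_add, gramPoly_single, congrMatrix_apply,
        gramPoly_transpose_mulMatrix_mul_mulMatrix hpd, hgram₁, hh]
      simp

theorem exists_pos_mul_eval_le {σ g : ℝ[X]} (hdeg : σ.degree ≤ g.degree)
    (hg : ∀ x, 0 < g.eval x) : ∃ ε > 0, ∀ x, ε * σ.eval x ≤ g.eval x := by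
  have hcont : Continuous fun x => σ.eval x / g.eval x :=
    σ.continuous.div g.continuous fun x => (hg x).ne'
  have hbigO : (fun x => σ.eval x / g.eval x) =O[cocompact ℝ] (1 : ℝ → ℝ) := by
    rw [← Metric.cobounded_eq_cocompact]
    refine ((isBigO_cobounded_of_degree_le hdeg).mul
      (isBigO_refl (fun x => (g.eval x)⁻¹) _)).congr
      (fun x => div_eq_mul_inv _ _) (fun x => mul_inv_cancel₀ (hg x).ne')
  obtain ⟨c, hc⟩ := isBounded_iff_forall_norm_le.1 (hcont.isBounded_range_iff_isBigO.2 hbigO)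
  have hc0 : 0 ≤ c := (norm_nonneg _).trans (hc _ ⟨0, rfl⟩)
  refine ⟨(c + 1)⁻¹, by positivity, fun x => ?_⟩
  have hx : σ.eval x / g.eval x ≤ c := (le_abs_self _).trans (hc _ ⟨x, rfl⟩)
  rw [div_le_iff₀ (hg x)] at hx
  rw [inv_mul_le_iff₀ (by positivity)]
  nlinarith [hg x]

theorem neg_mul_dotProduct_self_le_dotProduct_mulVec {n : Type*} [Fintype n]
    (W : Matrix n n ℝ) (x : n → ℝ) : -((∑ i, ∑ j, |W i j|) * (x ⬝ᵥ x)) ≤ x ⬝ᵥ W *ᵥ x := by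
  set S := x ⬝ᵥ x
  have hsq : ∀ i, x i * x i ≤ S := fun i =>
    single_le_sum (f := fun l => x l * x l) (fun l _ => mul_self_nonneg _) (mem_univ i)
  have hprod : ∀ i j, |x i * x j| ≤ S := fun i j => abs_le.2
    ⟨by nlinarith [hsq i, hsq j, sq_nonneg (x i + x j)],
      by nlinarith [hsq i, hsq j, sq_nonneg (x i - x j)]⟩
  calc -((∑ i, ∑ j, |W i j|) * S) = ∑ i, ∑ j, -(|W i j| * S) := by
        simp only [sum_mul, sum_neg_distrib]
    _ ≤ ∑ i, ∑ j, x i * (W i j * x j) := sum_le_sum fun i _ => sum_le_sum fun j _ => calc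
        -(|W i j| * S) ≤ -(|W i j| * |x i * x j|) :=
          neg_le_neg (mul_le_mul_of_nonneg_left (hprod i j) (abs_nonneg _))
        _ = -|W i j * (x i * x j)| := by rw [abs_mul (W i j)]
        _ ≤ W i j * (x i * x j) := neg_abs_le _
        _ = x i * (W i j * x j) := by ring
    _ = x ⬝ᵥ W *ᵥ x := by simp only [dotProduct, mulVec, mul_sum]

theorem posSemidef_smul_one_add {n : Type*} [Fintype n] [DecidableEq n] {W : Matrix n n ℝ}
    (hW : W.IsHermitian) {ε : ℝ} (hε : ∑ i, ∑ j, |W i j| ≤ ε) : (ε • 1 + W).PosSemidef := by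
  refine PosSemidef.of_dotProduct_mulVec_nonneg
    ((isHermitian_one.smul (.all ε)).add hW) fun x => ?_
  have hx := neg_mul_dotProduct_self_le_dotProduct_mulVec W x
  have hxx : 0 ≤ x ⬝ᵥ x := sum_nonneg fun i _ => mul_self_nonneg (x i)
  simp only [star_trivial, add_mulVec, smul_mulVec, one_mulVec, dotProduct_add, dotProduct_smul,
    smul_eq_mul]
  nlinarith [mul_le_mul_of_nonneg_right hε hxx]

theorem exists_posSemidef_gramPoly_add_smul_one_eq {m : ℕ} {g : ℝ[X]}
    (hdeg : g.natDegree = 2 * m) (hg : ∀ x, 0 < g.eval x) :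
    ∃ ε : ℝ, 0 < ε ∧ ∃ Q : Matrix (Fin (m + 1)) (Fin (m + 1)) ℝ,
      Q.PosSemidef ∧ gramPoly (m + 1) (Q + ε • 1) = g := by
  set σ := gramPoly (m + 1) 1
  have hg0 : g ≠ 0 := fun h0 => by simpa [h0] using hg 0
  have hσdeg : σ.degree ≤ g.degree := by
    rw [degree_eq_natDegree hg0, hdeg]
    exact degree_le_of_natDegree_le (natDegree_gramPoly_le m 1)
  obtain ⟨ε, hε, hεσ⟩ := exists_pos_mul_eval_le hσdeg hg
  have hdeg' : (g - C ε * σ).natDegree ≤ 2 * m :=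
    (natDegree_sub_le _ _).trans (max_le hdeg.le ((natDegree_C_mul_le _ _).trans
      (natDegree_gramPoly_le m 1)))
  obtain ⟨Q, hQ, hgram⟩ := exists_posSemidef_gramPoly_eq m hdeg' fun x => by simpa using hεσ x
  refine ⟨ε, hε, Q, hQ, ?_⟩
  rw [map_add, map_smul, hgram, smul_eq_C_mul, sub_add_cancel]

noncomputable def symMatrix (n : Type*) : (Sym2 n → ℝ) →ₗ[ℝ] Matrix n n ℝ where
  toFun v := of fun i j => v s(i, j)
  map_add' _ _ := rfl
  map_smul' _ _ := rfl

section symMatrix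

variable {n : Type*}

theorem symMatrix_apply (v : Sym2 n → ℝ) (i j : n) : symMatrix n v i j = v s(i, j) := rfl

theorem symMatrix_injective : Function.Injective (symMatrix n) := fun v w hvw => by
  ext s
  induction s using Sym2.ind with
  | h i j => exact congrFun₂ hvw i j

theorem isSymm_symMatrix (v : Sym2 n → ℝ) : (symMatrix n v).IsSymm := by
  ext i j
  simp only [transpose_apply, symMatrix_apply, Sym2.eq_swap]

theorem mem_range_symMatrix {A : Matrix n n ℝ} (hA : A.IsSymm) :
    A ∈ LinearMap.range (symMatrix n) :=
  ⟨Sym2.lift ⟨fun i j => A i j, fun i j => (hA.apply i j).symm⟩, by ext i j; rfl⟩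

end symMatrix

theorem range_gramPoly_comp_symMatrix (m : ℕ) :
    LinearMap.range ((gramPoly (m + 1)).comp (symMatrix (Fin (m + 1)))) =
      degreeLT ℝ (2 * m + 1) := by
  refine le_antisymm ?_ ?_
  · rintro _ ⟨v, rfl⟩
    rw [mem_degreeLT]
    exact degree_le_natDegree.trans_lt
      (by exact_mod_cast Nat.lt_succ_of_le (natDegree_gramPoly_le m _))
  rw [degreeLT_eq_span_X_pow, Submodule.span_le]
  intro _ hX
  obtain ⟨c, hc, rfl⟩ := Finset.mem_image.1 (Finset.mem_coe.1 hX)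
  -- `X ^ c` is half the Gram polynomial of the symmetric matrix `A + Aᵀ`, `A` a matrix unit
  obtain ⟨i, j, hij⟩ : ∃ i j : Fin (m + 1), (i : ℕ) + j = c :=
    ⟨⟨min c m, by omega⟩, ⟨c - min c m, by simp at hc; omega⟩, by simp⟩
  set A := single i j (1 : ℝ)
  obtain ⟨v, hv⟩ := mem_range_symMatrix (A := A + Aᵀ) (by simp [IsSymm, add_comm])
  refine ⟨(2 : ℝ)⁻¹ • v, ?_⟩
  rw [map_smul, LinearMap.comp_apply, hv, map_add, gramPoly_transpose, gramPoly_single, hij,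
    map_one, one_mul, ← two_smul ℝ, smul_smul, inv_mul_cancel₀ two_ne_zero, one_smul]

theorem finrank_range_symMatrix_inf_ker_gramPoly (m : ℕ) :
    Module.finrank ℝ
        ↥(LinearMap.range (symMatrix (Fin (m + 1))) ⊓ LinearMap.ker (gramPoly (m + 1))) =
      m.choose 2 := by
  set φ := (gramPoly (m + 1)).comp (symMatrix (Fin (m + 1)))
  have hmap : LinearMap.range (symMatrix (Fin (m + 1))) ⊓ LinearMap.ker (gramPoly (m + 1)) =
      (LinearMap.ker φ).map (symMatrix (Fin (m + 1))) := by
    rw [LinearMap.ker_comp, Submodule.map_comap_eq]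
  have hrank := φ.finrank_range_add_finrank_ker
  rw [range_gramPoly_comp_symMatrix, (degreeLTEquiv ℝ _).finrank_eq, Module.finrank_fin_fun,
    Module.finrank_fintype_fun_eq_card, Sym2.card, Fintype.card_fin] at hrank
  rw [hmap, ← (Submodule.equivMapOfInjective _ symMatrix_injective _).finrank_eq]
  have hchoose : (m + 1 + 1).choose 2 = 2 * m + 1 + m.choose 2 := by
    simp [Nat.choose_succ_succ']
    ring
  omega

theorem direction_affineSpan_gramS {m : ℕ} {g : ℝ[X]} (hdeg : g.natDegree = 2 * m)
    (hg : ∀ x, 0 < g.eval x) : (affineSpan ℝ (GramS m g)).direction =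
      LinearMap.range (symMatrix (Fin (m + 1))) ⊓ LinearMap.ker (gramPoly (m + 1)) := by
  rw [direction_affineSpan]
  refine le_antisymm ?_ ?_
  · rw [vectorSpan_def, Submodule.span_le]
    rintro _ ⟨Q, hQ, Q', hQ', rfl⟩
    obtain ⟨hQ, hgQ⟩ := mem_gramS_iff.1 hQ
    obtain ⟨hQ', hgQ'⟩ := mem_gramS_iff.1 hQ'
    refine ⟨mem_range_symMatrix ?_, ?_⟩
    · exact (isHermitian_iff_isSymm.1 hQ.isHermitian).sub
        (isHermitian_iff_isSymm.1 hQ'.isHermitian)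
    · show gramPoly (m + 1) (Q - Q') = 0
      rw [map_sub, ← hgQ, ← hgQ', sub_self]
  rintro W ⟨⟨v, rfl⟩, hW⟩
  set W := symMatrix (Fin (m + 1)) v
  obtain ⟨ε, hε, Q, hQ, hgram⟩ := exists_posSemidef_gramPoly_add_smul_one_eq hdeg hg
  -- `Q + ε • 1 + t • W` stays in the spectrahedron as long as `t` is small compared with `ε`
  set S := ∑ i, ∑ j, |W i j|
  have hS : 0 ≤ S := sum_nonneg fun i _ => sum_nonneg fun j _ => abs_nonneg _
  set t := ε / (S + 1)
  have ht : 0 < t := by positivity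
  have htS : ∑ i, ∑ j, |(t • W) i j| ≤ ε := by
    simp only [Matrix.smul_apply, smul_eq_mul, abs_mul, abs_of_pos ht, ← mul_sum]
    rw [div_mul_eq_mul_div, div_le_iff₀ (by positivity)]
    nlinarith
  have hmem : Q + ε • 1 + t • W ∈ GramS m g := by
    refine mem_gramS_iff.2 ⟨?_, ?_⟩
    · rw [add_assoc]
      exact hQ.add (posSemidef_smul_one_add
        ((isHermitian_iff_isSymm.2 (isSymm_symMatrix v)).smul (.all t)) htS)
    · rw [map_add, hgram, map_smul, LinearMap.mem_ker.1 hW, smul_zero, add_zero]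
  have hmem₀ : Q + ε • 1 ∈ GramS m g := ⟨hQ.add (PosSemidef.one.smul hε.le), hgram.symm⟩
  have htW := vsub_mem_vectorSpan ℝ hmem hmem₀
  rw [vsub_eq_sub, add_sub_cancel_left] at htW
  simpa [smul_smul, inv_mul_cancel₀ ht.ne'] using Submodule.smul_mem _ t⁻¹ htW

theorem X_sub_C_pow_dvd_of_dvd_sum_sq {ι : Type*} [Fintype ι] (ρ : ℝ) (n : ℕ) {q : ι → ℝ[X]}
    (h : (X - C ρ) ^ (2 * n) ∣ ∑ s, q s ^ 2) (s : ι) : (X - C ρ) ^ n ∣ q s := by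
  induction n generalizing q with
  | zero => simp
  | succ n ih =>
    have hroot : ∀ s, (q s).IsRoot ρ := by
      have hsum : (∑ s, q s ^ 2).IsRoot ρ :=
        dvd_iff_isRoot.1 ((dvd_pow_self _ (by omega)).trans h)
      simp only [IsRoot.def, eval_finsetSum, eval_pow] at hsum
      intro s
      exact pow_eq_zero_iff two_ne_zero |>.1 <|
        (sum_eq_zero_iff_of_nonneg fun s _ => sq_nonneg _).1 hsum s (mem_univ s)
    choose u hu using fun s => dvd_iff_isRoot.2 (hroot s)
    have hfactor : ∑ s, q s ^ 2 = (X - C ρ) ^ 2 * ∑ s, u s ^ 2 := by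
      simp only [hu, mul_pow, mul_sum]
    rw [hfactor, mul_add, mul_one, pow_add, mul_comm] at h
    rw [hu s, pow_succ']
    exact mul_dvd_mul_left _
      (ih ((mul_dvd_mul_iff_left (pow_ne_zero 2 (X_sub_C_ne_zero ρ))).1 h))

theorem prod_X_sub_C_pow_dvd_of_sq_dvd_sum_sq {ι κ : Type*} [Fintype ι] [Fintype κ]
    {r : κ → ℝ} (hr : Function.Injective r) (e : κ → ℕ) {q : ι → ℝ[X]}
    (h : (∏ i, (X - C (r i)) ^ e i) ^ 2 ∣ ∑ s, q s ^ 2) (s : ι) :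
    ∏ i, (X - C (r i)) ^ e i ∣ q s := by
  refine prod_dvd_of_coprime (fun i _ j _ hij => ((pairwise_coprime_X_sub_C hr) hij).pow)
    fun i _ => X_sub_C_pow_dvd_of_dvd_sum_sq (r i) (e i) (Dvd.dvd.trans ?_ h) s
  rw [← prod_pow, mul_comm, pow_mul]
  exact dvd_prod_of_mem _ (mem_univ i)

theorem bijOn_congrMatrix_mulMatrix_gramS {p g : ℝ[X]} {m d : ℕ} (hp : p ≠ 0)
    (hpd : p.natDegree + m = d)
    (hdvd : ∀ q : Fin (d + 1) → ℝ[X], p ^ 2 ∣ ∑ s, q s ^ 2 → ∀ s, p ∣ q s) :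
    Set.BijOn (congrMatrix (mulMatrix p m d)) (GramS m g) (GramS d (p ^ 2 * g)) := by
  set M := mulMatrix p m d
  refine ⟨fun Q hQ => ?_, (congrMatrix_injective (vecMul_mulMatrix_injective hp hpd.le)).injOn,
    fun Q hQ => ?_⟩
  · obtain ⟨hQ, hgQ⟩ := mem_gramS_iff.1 hQ
    refine mem_gramS_iff.2 ⟨?_, ?_⟩
    · simpa [congrMatrix_apply] using hQ.conjTranspose_mul_mul_same M
    · rw [congrMatrix_apply, gramPoly_transpose_mulMatrix_mul_mulMatrix hpd.le, ← hgQ]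
  obtain ⟨hQ, hfQ⟩ := mem_gramS_iff.1 hQ
  obtain ⟨B, hB⟩ : ∃ B : Matrix (Fin (d + 1)) (Fin (d + 1)) ℝ, Q = Bᵀ * B := by
    open scoped MatrixOrder in
    obtain ⟨B, hB⟩ := CStarAlgebra.nonneg_iff_eq_star_mul_self.mp hQ.nonneg
    exact ⟨B, hB⟩
  have hsum : p ^ 2 * g = ∑ s, ofFn (d + 1) (B s) ^ 2 := by
    rw [hfQ, hB, gramPoly_transpose_mul_self]
  choose w hw using fun s =>
    exists_vecMul_mulMatrix_eq hp hpd (hdvd _ (hsum ▸ dvd_mul_right _ _) s)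
  have hBM : of w * M = B := by
    ext s a
    exact congrFun (hw s) a
  refine ⟨(of w)ᵀ * of w, mem_gramS_iff.2 ⟨?_, ?_⟩, ?_⟩
  · simpa using posSemidef_conjTranspose_mul_self (of w)
  · refine mul_left_cancel₀ (pow_ne_zero 2 hp) ?_
    rw [← gramPoly_transpose_mulMatrix_mul_mulMatrix hpd.le, hsum, ← gramPoly_transpose_mul_self,
      ← hBM, transpose_mul, Matrix.mul_assoc, Matrix.mul_assoc, Matrix.mul_assoc]
  · rw [congrMatrix_apply, hB, ← hBM, transpose_mul, Matrix.mul_assoc, Matrix.mul_assoc,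
      Matrix.mul_assoc]

theorem finrank_direction_affineSpan_image {k V W : Type*} [DivisionRing k] [AddCommGroup V]
    [Module k V] [AddCommGroup W] [Module k W] {T : V →ₗ[k] W} (hT : Function.Injective T)
    (s : Set V) : Module.finrank k (affineSpan k (T '' s)).direction =
      Module.finrank k (affineSpan k s).direction := by
  rw [direction_affineSpan, direction_affineSpan, ← LinearMap.coe_toAffineMap,
    ← AffineMap.map_vectorSpan]
  exact (Submodule.equivMapOfInjective _ hT _).finrank_eq.symm

theorem stmt_12_general (d k : ℕ) (f g : Polynomial ℝ)
    (r : Fin k → ℝ) (hr : Function.Injective r)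
    (e : Fin k → ℕ) (hed : ∑ i, e i ≤ d)
    (hf : f = (∏ i, (X - C (r i)) ^ (2 * e i)) * g)
    (hgdeg : g.natDegree = 2 * (d - ∑ i, e i)) (hgpos : ∀ x : ℝ, 0 < g.eval x) :
    (∃ T : Matrix (Fin (d - ∑ i, e i + 1)) (Fin (d - ∑ i, e i + 1)) ℝ →ₗ[ℝ]
            Matrix (Fin (d + 1)) (Fin (d + 1)) ℝ,
        Function.Injective T ∧
        Set.BijOn T (GramS (d - ∑ i, e i) g) (GramS d f)) ∧
    Module.finrank ℝ (affineSpan ℝ (GramS d f)).direction = (d - ∑ i, e i).choose 2 := by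
  set p := ∏ i, (X - C (r i)) ^ e i
  have hmonic : ∀ i ∈ univ, ((X - C (r i)) ^ e i).Monic := fun i _ => (monic_X_sub_C _).pow _
  have hp : p ≠ 0 := (monic_prod_of_monic _ _ hmonic).ne_zero
  have hpd : p.natDegree + (d - ∑ i, e i) = d := by
    simp only [p, natDegree_prod_of_monic _ _ hmonic, natDegree_pow, natDegree_X_sub_C, mul_one]
    omega
  have hfp : f = p ^ 2 * g := by
    simp only [hf, p, ← prod_pow, ← pow_mul, mul_comm]
  have hT := congrMatrix_injective (vecMul_mulMatrix_injective hp hpd.le)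
  have hbij := bijOn_congrMatrix_mulMatrix_gramS (g := g) hp hpd fun q hq =>
    prod_X_sub_C_pow_dvd_of_sq_dvd_sum_sq hr e hq
  rw [hfp]
  refine ⟨⟨_, hT, hbij⟩, ?_⟩
  rw [← hbij.image_eq, finrank_direction_affineSpan_image hT,
    direction_affineSpan_gramS hgdeg hgpos, finrank_range_symMatrix_inf_ker_gramPoly]

/-- Let `f` be a univariate real polynomial of degree `2d`, nonnegative on `ℝ`,
written as `f = (x−r₁)^{2e₁} ⋯ (x−r_k)^{2e_k} · g` with `r₁, …, r_k` distinct reals,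
`e₁, …, e_k` positive, `e = e₁ + ⋯ + e_k` and `g` of degree `2(d−e)` strictly positive on `ℝ`.
Then some injective linear map `T` between the corresponding matrix spaces maps `GramS(g)`
bijectively onto `GramS(f)`; in particular the affine span of `GramS(f)` has dimension
`C(d−e, 2)`. -/
theorem stmt_12 (d k : ℕ) (f g : Polynomial ℝ)
    (r : Fin k → ℝ) (hr : Function.Injective r)
    (e : Fin k → ℕ) (he : ∀ i, 0 < e i) (hed : ∑ i, e i ≤ d)
    (hf : f = (∏ i, (X - C (r i)) ^ (2 * e i)) * g)
    (hfdeg : f.natDegree = 2 * d) (hfnonneg : ∀ x : ℝ, 0 ≤ f.eval x)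
    (hgdeg : g.natDegree = 2 * (d - ∑ i, e i)) (hgpos : ∀ x : ℝ, 0 < g.eval x) :
    (∃ T : Matrix (Fin (d - ∑ i, e i + 1)) (Fin (d - ∑ i, e i + 1)) ℝ →ₗ[ℝ]
            Matrix (Fin (d + 1)) (Fin (d + 1)) ℝ,
        Function.Injective T ∧
        Set.BijOn T (GramS (d - ∑ i, e i) g) (GramS d f)) ∧
    Module.finrank ℝ (affineSpan ℝ (GramS d f)).direction = (d - ∑ i, e i).choose 2 :=
  stmt_12_general d k f g r hr e hed hf hgdeg hgpos
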